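/- Let a1, a2 ≥ 0 with (a1,a2) ≠ (0,0). For any compatible pair (S1,S2) on the maximal Dyck path D_{a1,a2}, either |S1| < a2 or |S2| < a1. -/

import Mathlib

/-!
Weight each edge by `S1` if it is horizontal and by `-1` if it is vertical, and dually by `-1`
and `S2`. The balance condition of (HGC) says that the first weight sums to zero on `he`, that of
(VGC) that the second one sums to zero on `ev`. If `|S1| ≥ a2` and `|S2| ≥ a1`, both weights have
nonnegative sum around the loop. Unroll the loop into a periodic sequence with prefix sums `P`
and `R` of the two weights. Take `K` with `R ≤ R K` on `[0, K]` and `K ≥ a1 + a2`, then the last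
minimiser `i` of `P` on the period `[K - a1 - a2, K)`, then the first maximiser `k` of `R` on
`(i, K]`. Every proper initial window of `[i, k)` has positive first weight and every proper final
window positive second weight, so the horizontal edge at `i` and the vertical edge at `k - 1`
satisfy neither (HGC) nor (VGC). The shape of the path enters only through `pos` being a bijection
onto `Fin (a1 + a2)`.
-/

open scoped Classical
noncomputable section

namespace Dyck

/-- The edges of the maximal Dyck path `D_{a,b}`: `a` horizontal edges
`h_1, …, h_a` (0-indexed here) and `b` vertical edges `v_1, …, v_b`. -/
abbrev Edge (a b : ℕ) := Fin a ⊕ Fin b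

/-- The height of the horizontal edge `h_{j+1}` of `D_{a,b}` is `⌊j·b/a⌋`. -/
def ht (a b : ℕ) (j : Fin a) : ℕ := j.1 * b / a

/-- The depth of the vertical edge `v_{j+1}` of `D_{a,b}` is `⌈(j+1)·a/b⌉`. -/
def dep (a b : ℕ) (j : Fin b) : ℕ := ((j.1 + 1) * a + b - 1) / b

/-- The position (0-indexed) of an edge along the maximal Dyck path `D_{a,b}`:
a horizontal edge `h_{j+1}` is preceded by `j` horizontal edges and by `ht j`
vertical edges; a vertical edge `v_{j+1}` is preceded by `j` vertical edges and
by `dep j` horizontal edges. -/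
def pos (a b : ℕ) : Edge a b → ℕ
  | Sum.inl j => j.1 + ht a b j
  | Sum.inr j => j.1 + dep a b j

/-- Cyclic distance from `e` to `f` along the closed loop `D_{a,b}`
(the endpoints `(0,0)` and `(a,b)` are identified). -/
def dd (a b : ℕ) (e f : Edge a b) : ℕ := (pos a b f + (a + b) - pos a b e) % (a + b)

/-- The (cyclic) subpath of `D_{a,b}` from `e` to `f`, both included. -/
def subpath (a b : ℕ) (e f : Edge a b) : Finset (Edge a b) :=
  Finset.univ.filter fun g => dd a b e g ≤ dd a b e f

/-- The number of horizontal edges in a set of edges. -/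
def hcount (a b : ℕ) (s : Finset (Edge a b)) : ℕ := (s.filter fun e => e.isLeft = true).card

/-- The number of vertical edges in a set of edges. -/
def vcount (a b : ℕ) (s : Finset (Edge a b)) : ℕ := (s.filter fun e => e.isRight = true).card

/-- The sum of a horizontal grading over the horizontal edges of a set of edges. -/
def hsum (a b : ℕ) (S1 : Fin a → ℕ) (s : Finset (Edge a b)) : ℕ :=
  ∑ e ∈ s, Sum.elim S1 (fun _ => 0) e

/-- The sum of a vertical grading over the vertical edges of a set of edges. -/
def vsum (a b : ℕ) (S2 : Fin b → ℕ) (s : Finset (Edge a b)) : ℕ :=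
  ∑ e ∈ s, Sum.elim (fun _ => 0) S2 e

/-- The horizontal shadow statistic `f_{S1}` of a set of edges. -/
def fH (a b : ℕ) (S1 : Fin a → ℕ) (s : Finset (Edge a b)) : ℤ :=
  (hsum a b S1 s : ℤ) - (vcount a b s : ℤ)

/-- The vertical shadow statistic `f_{S2}` of a set of edges. -/
def fV (a b : ℕ) (S2 : Fin b → ℕ) (s : Finset (Edge a b)) : ℤ :=
  (vsum a b S2 s : ℤ) - (hcount a b s : ℤ)

/-- Horizontal grading condition (HGC) for the pair `(h, v)`: there is an edge `e`
with `he` a proper subpath of `hv` and `|(he)_2| = Σ_{h' ∈ (he)_1} S1(h')`. -/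
def HGC (a b : ℕ) (S1 : Fin a → ℕ) (h : Fin a) (v : Fin b) : Prop :=
  ∃ e : Edge a b, dd a b (.inl h) e < dd a b (.inl h) (.inr v) ∧
    vcount a b (subpath a b (.inl h) e) = hsum a b S1 (subpath a b (.inl h) e)

/-- Vertical grading condition (VGC) for the pair `(h, v)`: there is an edge `e`
with `ev` a proper subpath of `hv` and `|(ev)_1| = Σ_{v' ∈ (ev)_2} S2(v')`. -/
def VGC (a b : ℕ) (S2 : Fin b → ℕ) (h : Fin a) (v : Fin b) : Prop :=
  ∃ e : Edge a b, 0 < dd a b (.inl h) e ∧ dd a b (.inl h) e ≤ dd a b (.inl h) (.inr v) ∧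
    hcount a b (subpath a b e (.inr v)) = vsum a b S2 (subpath a b e (.inr v))

/-- A pair of gradings `(S1, S2)` on `D_{a,b}` is compatible. -/
def Compatible (a b : ℕ) (S1 : Fin a → ℕ) (S2 : Fin b → ℕ) : Prop :=
  ∀ (h : Fin a) (v : Fin b), HGC a b S1 h v ∨ VGC a b S2 h v

/-- `e` is a "balanced" endpoint for the horizontal edge `h`:
`|(he)_2| = Σ_{h' ∈ (he)_1} S1(h')`. -/
def balH (a b : ℕ) (S1 : Fin a → ℕ) (h : Fin a) (e : Edge a b) : Prop :=
  vcount a b (subpath a b (.inl h) e) = hsum a b S1 (subpath a b (.inl h) e)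

/-- The local shadow `sh(h; S1)`: the vertical edges of the shortest balanced
subpath starting at `h` (all of `D2` if there is none). -/
def shH (a b : ℕ) (S1 : Fin a → ℕ) (h : Fin a) : Finset (Fin b) :=
  Finset.univ.filter fun v =>
    ∀ e : Edge a b, balH a b S1 h e → dd a b (.inl h) (.inr v) ≤ dd a b (.inl h) e

/-- The shadow `sh(S1) = ⋃_h sh(h; S1)`. -/
def shadowH (a b : ℕ) (S1 : Fin a → ℕ) : Finset (Fin b) :=
  Finset.univ.filter fun v => ∃ h : Fin a, v ∈ shH a b S1 h

/-- The vertical edges removed from `sh(S1)` to form the remote shadow: for each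
`d ∈ [1,a]`, the (up to) `S1(h_d)` vertical edges of depth `d` immediately
following `h_d`. -/
def removedH (a b : ℕ) (S1 : Fin a → ℕ) : Finset (Fin b) :=
  Finset.univ.filter fun v => ∃ hd : Fin a, hd.1 + 1 = dep a b v ∧
    (Finset.univ.filter fun v' : Fin b => dep a b v' = dep a b v ∧ v'.1 < v.1).card < S1 hd

/-- The remote shadow `rsh(S1)`. -/
def rshH (a b : ℕ) (S1 : Fin a → ℕ) : Finset (Fin b) :=
  shadowH a b S1 \ removedH a b S1

/-- `e` is a "balanced" starting point for the vertical edge `v`: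
`|(ev)_1| = Σ_{v' ∈ (ev)_2} S2(v')`. -/
def balV (a b : ℕ) (S2 : Fin b → ℕ) (e : Edge a b) (v : Fin b) : Prop :=
  hcount a b (subpath a b e (.inr v)) = vsum a b S2 (subpath a b e (.inr v))

/-- The local shadow `sh(v; S2)`: the horizontal edges of the shortest balanced
subpath ending at `v` (all of `D1` if there is none). -/
def shV (a b : ℕ) (S2 : Fin b → ℕ) (v : Fin b) : Finset (Fin a) :=
  Finset.univ.filter fun h =>
    ∀ e : Edge a b, balV a b S2 e v → dd a b (.inl h) (.inr v) ≤ dd a b e (.inr v)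

/-- The shadow `sh(S2) = ⋃_v sh(v; S2)`. -/
def shadowV (a b : ℕ) (S2 : Fin b → ℕ) : Finset (Fin a) :=
  Finset.univ.filter fun h => ∃ v : Fin b, h ∈ shV a b S2 v

/-- The horizontal edges removed from `sh(S2)` to form the remote shadow: for each
`ℓ ∈ [1,b]`, the (up to) `S2(v_ℓ)` horizontal edges of height `ℓ−1` immediately
preceding `v_ℓ`. -/
def removedV (a b : ℕ) (S2 : Fin b → ℕ) : Finset (Fin a) :=
  Finset.univ.filter fun h => ∃ vl : Fin b, vl.1 = ht a b h ∧
    (Finset.univ.filter fun h' : Fin a => ht a b h' = ht a b h ∧ h.1 < h'.1).card < S2 vl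

/-- The remote shadow `rsh(S2)`. -/
def rshV (a b : ℕ) (S2 : Fin b → ℕ) : Finset (Fin a) :=
  shadowV a b S2 \ removedV a b S2

/-- The support of a grading. -/
def suppH (a : ℕ) (S1 : Fin a → ℕ) : Finset (Fin a) := Finset.univ.filter fun h => S1 h ≠ 0
def suppV (b : ℕ) (S2 : Fin b → ℕ) : Finset (Fin b) := Finset.univ.filter fun v => S2 v ≠ 0

section Path

variable {a b : ℕ}

theorem lt_ht_iff (ha : 0 < a) (j : Fin a) (i : ℕ) : i < ht a b j ↔ (i + 1) * a ≤ j * b :=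
  Nat.le_div_iff_mul_le ha

theorem dep_le_iff (hb : 0 < b) (j : Fin b) (i : ℕ) : dep a b j ≤ i ↔ (j + 1) * a ≤ i * b := by
  rw [dep, ← Nat.lt_add_one_iff, Nat.div_lt_iff_lt_mul hb, Nat.succ_mul i b]
  omega

theorem ht_le (j : Fin a) : ht a b j ≤ b :=
  Nat.div_le_of_le_mul (Nat.mul_le_mul_right b j.2.le)

theorem dep_le (j : Fin b) : dep a b j ≤ a :=
  (dep_le_iff j.pos j a).2 (by rw [mul_comm a b]; exact Nat.mul_le_mul_right a j.2)

theorem ht_mono : Monotone (ht a b) := fun _ _ hij =>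
  Nat.div_le_div_right (Nat.mul_le_mul_right b hij)

theorem dep_mono : Monotone (dep a b) := fun _ _ hij =>
  Nat.div_le_div_right (Nat.sub_le_sub_right (Nat.add_le_add_right
    (Nat.mul_le_mul_right a (Nat.succ_le_succ hij)) b) 1)

theorem pos_lt (e : Edge a b) : pos a b e < a + b := by
  cases e with
  | inl j => have := ht_le (b := b) j; simp only [pos]; omega
  | inr j => have := dep_le (a := a) j; simp only [pos]; omega

theorem pos_inl_ne_pos_inr (h : Fin a) (v : Fin b) : pos a b (.inl h) ≠ pos a b (.inr v) := by
  have hv := lt_ht_iff h.pos h v.1 (b := b)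
  have hh := dep_le_iff v.pos v h.1 (a := a)
  simp only [pos]
  by_cases hc : (v.1 + 1) * a ≤ h.1 * b
  · have := hv.2 hc; have := hh.2 hc; omega
  · have := mt hv.1 hc; have := mt hh.1 hc; omega

theorem pos_injective : Function.Injective (pos a b) := by
  have hpos : pos a b = Sum.elim (fun j => j.1 + ht a b j) (fun j => j.1 + dep a b j) := by
    ext e; cases e <;> rfl
  rw [hpos]
  refine Function.Injective.sumElim ?_ ?_ pos_inl_ne_pos_inr
  · exact (StrictMono.add_monotone Fin.val_strictMono ht_mono).injective
  · exact (StrictMono.add_monotone Fin.val_strictMono dep_mono).injective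

def posEquiv (a b : ℕ) : Edge a b ≃ Fin (a + b) :=
  Equiv.ofBijective (fun e => ⟨pos a b e, pos_lt e⟩)
    ((Fintype.bijective_iff_injective_and_card _).2
      ⟨fun _ _ hef => pos_injective (congrArg Fin.val hef), by simp⟩)

theorem dd_eq_val_sub (e f : Edge a b) : dd a b e f = (posEquiv a b f - posEquiv a b e).val := by
  rw [Fin.val_sub]
  simp only [dd, posEquiv, Equiv.ofBijective_apply]
  have := pos_lt e
  congr 1
  omega

def hWeight (S1 : Fin a → ℕ) : Edge a b → ℤ := Sum.elim (fun j => S1 j) fun _ => -1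

def vWeight (S2 : Fin b → ℕ) : Edge a b → ℤ := Sum.elim (fun _ => -1) fun j => S2 j

theorem fH_eq_sum (S1 : Fin a → ℕ) (s : Finset (Edge a b)) :
    fH a b S1 s = ∑ g ∈ s, hWeight S1 g := by
  simp only [fH, hsum, vcount, Finset.card_filter, Nat.cast_sum, ← Finset.sum_sub_distrib]
  refine Finset.sum_congr rfl fun g _ => ?_
  cases g <;> simp [hWeight]

theorem fV_eq_sum (S2 : Fin b → ℕ) (s : Finset (Edge a b)) :
    fV a b S2 s = ∑ g ∈ s, vWeight S2 g := by
  simp only [fV, vsum, hcount, Finset.card_filter, Nat.cast_sum, ← Finset.sum_sub_distrib]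
  refine Finset.sum_congr rfl fun g _ => ?_
  cases g <;> simp [vWeight]

theorem sum_hWeight (S1 : Fin a → ℕ) : ∑ e : Edge a b, hWeight S1 e = ∑ j, (S1 j : ℤ) - b := by
  simp [hWeight, Fintype.sum_sum_type, sub_eq_add_neg]

theorem sum_vWeight (S2 : Fin b → ℕ) : ∑ e : Edge a b, vWeight S2 e = ∑ j, (S2 j : ℤ) - a := by
  simp [vWeight, Fintype.sum_sum_type, sub_eq_add_neg, add_comm]

theorem vWeight_neg_of_hWeight_nonneg (S1 : Fin a → ℕ) (S2 : Fin b → ℕ) {e : Edge a b}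
    (he : 0 ≤ hWeight S1 e) : vWeight S2 e < 0 := by
  cases e with
  | inl _ => simp [vWeight]
  | inr _ => simp [hWeight] at he

end Path

theorem exists_last_min_image {β : Type*} [LinearOrder β] (s : Finset ℕ) (hs : s.Nonempty)
    (f : ℕ → β) : ∃ i ∈ s, ∀ m ∈ s, f i ≤ f m ∧ (i < m → f i < f m) := by
  obtain ⟨i, hi, hmin⟩ := s.exists_min_image (fun m => toLex (f m, OrderDual.toDual m)) hs
  refine ⟨i, hi, fun m hm => ?_⟩
  rcases Prod.Lex.toLex_le_toLex.1 (hmin m hm) with hlt | ⟨heq, hle⟩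
  · exact ⟨hlt.le, fun _ => hlt⟩
  · exact ⟨heq.le, fun him => absurd (OrderDual.toDual_le_toDual.1 hle) him.not_ge⟩

theorem exists_first_max_image {β : Type*} [LinearOrder β] (s : Finset ℕ) (hs : s.Nonempty)
    (f : ℕ → β) : ∃ k ∈ s, ∀ m ∈ s, f m ≤ f k ∧ (m < k → f m < f k) := by
  obtain ⟨k, hk, hmax⟩ := s.exists_max_image (fun m => toLex (f m, OrderDual.toDual m)) hs
  refine ⟨k, hk, fun m hm => ?_⟩
  rcases Prod.Lex.toLex_le_toLex.1 (hmax m hm) with hlt | ⟨heq, hle⟩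
  · exact ⟨hlt.le, fun _ => hlt⟩
  · exact ⟨heq.le, fun hmk => absurd (OrderDual.toDual_le_toDual.1 hle) hmk.not_ge⟩

theorem sum_range_add_of_periodic {M : Type*} [AddCommMonoid M] {f : ℕ → M} {N : ℕ}
    (hf : Function.Periodic f N) (m : ℕ) :
    ∑ t ∈ Finset.range (N + m), f t = ∑ t ∈ Finset.range N, f t + ∑ t ∈ Finset.range m, f t := by
  rw [Finset.sum_range_add]
  exact congrArg _ (Finset.sum_congr rfl fun t _ => by rw [add_comm, hf])

open Finset in
theorem exists_forall_sum_range_le {N : ℕ} (hN : 0 < N) {y : ℕ → ℤ}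
    (hy : Function.Periodic y N) (hyN : 0 ≤ ∑ t ∈ range N, y t) :
    ∃ k₀, ∀ m ≤ N + k₀, ∑ t ∈ range m, y t ≤ ∑ t ∈ range (N + k₀), y t := by
  obtain ⟨k₀, hk₀, hk₀max⟩ := (range N).exists_max_image (fun m => ∑ t ∈ range m, y t)
    (nonempty_range_iff.2 hN.ne')
  refine ⟨k₀, fun m hm => ?_⟩
  rw [sum_range_add_of_periodic hy]
  rcases lt_or_ge m N with hmN | hmN
  · linarith [hk₀max m (mem_range.2 hmN)]
  · obtain ⟨m', rfl⟩ := Nat.exists_eq_add_of_le hmN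
    rw [sum_range_add_of_periodic hy]
    linarith [hk₀max m' (mem_range.2 (by rw [mem_range] at hk₀; omega))]

open Finset in
theorem exists_initial_final_sums_pos {N : ℕ} (hN : 0 < N) {x y : ℕ → ℤ}
    (hx : Function.Periodic x N) (hy : Function.Periodic y N)
    (hxN : 0 ≤ ∑ t ∈ range N, x t) (hyN : 0 ≤ ∑ t ∈ range N, y t)
    (hxy : ∀ t, 0 ≤ x t → y t < 0) :
    ∃ i k, i + 2 ≤ k ∧ k ≤ i + N ∧
      ∀ m, i < m → m < k → 0 < ∑ t ∈ Ico i m, x t ∧ 0 < ∑ t ∈ Ico m k, y t := by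
  obtain ⟨k₀, hRK⟩ := exists_forall_sum_range_le hN hy hyN
  obtain ⟨P, hP⟩ : ∃ P : ℕ → ℤ, ∀ m, P m = ∑ t ∈ range m, x t := ⟨_, fun _ => rfl⟩
  obtain ⟨R, hR⟩ : ∃ R : ℕ → ℤ, ∀ m, R m = ∑ t ∈ range m, y t := ⟨_, fun _ => rfl⟩
  simp only [← hR] at hRK
  have hPs (m : ℕ) : P (m + 1) = P m + x m := by rw [hP, hP, sum_range_succ]
  have hRs (m : ℕ) : R (m + 1) = R m + y m := by rw [hR, hR, sum_range_succ]
  have hPK : P k₀ ≤ P (N + k₀) := by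
    rw [hP, hP, sum_range_add_of_periodic hx]
    linarith
  obtain ⟨i, hi, himin⟩ := exists_last_min_image (Icc k₀ (N + k₀ - 1)) (nonempty_Icc.2 (by omega)) P
  rw [mem_Icc] at hi
  have hPi : P i ≤ P (N + k₀) := (himin k₀ (mem_Icc.2 ⟨le_rfl, by omega⟩)).1.trans hPK
  have hstep (hxi : 0 ≤ x i) : R (i + 1) < R (N + k₀) := by
    have := hxy i hxi; have := hRK i (by omega); have := hRs i
    omega
  have hiK : i + 2 ≤ N + k₀ := by
    by_contra hcon
    have hi' : i + 1 = N + k₀ := by omega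
    have hPs' := hPs i
    rw [hi'] at hPs'
    exact (hi' ▸ hstep (by omega)).false
  have hRi : R (i + 1) < R (N + k₀) := by
    have := (himin (i + 1) (mem_Icc.2 ⟨by omega, by omega⟩)).2 (by omega)
    exact hstep (by have := hPs i; omega)
  obtain ⟨k, hk, hkmax⟩ :=
    exists_first_max_image (Icc (i + 1) (N + k₀)) (nonempty_Icc.2 (by omega)) R
  rw [mem_Icc] at hk
  have hki : i + 2 ≤ k := by
    by_contra hcon
    have := (hkmax (N + k₀) (mem_Icc.2 ⟨by omega, le_rfl⟩)).1
    have : k = i + 1 := by omega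
    subst this
    omega
  refine ⟨i, k, hki, by omega, fun m him hmk => ?_⟩
  rw [sum_Ico_eq_sub _ him.le, sum_Ico_eq_sub _ hmk.le, ← hP, ← hP, ← hR, ← hR, sub_pos, sub_pos]
  exact ⟨(himin m (mem_Icc.2 ⟨by omega, by omega⟩)).2 him,
    (hkmax m (mem_Icc.2 ⟨by omega, by omega⟩)).2 hmk⟩

section Cyclic

open Fin.NatCast

variable {a b : ℕ} [NeZero (a + b)]

def edgeAt (a b : ℕ) [NeZero (a + b)] (t : ℕ) : Edge a b := (posEquiv a b).symm (t : Fin (a + b))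

theorem posEquiv_edgeAt (t : ℕ) : posEquiv a b (edgeAt a b t) = (t : Fin (a + b)) :=
  (posEquiv a b).apply_symm_apply _

theorem edgeAt_periodic : Function.Periodic (edgeAt a b) (a + b) := fun t => by
  simp [edgeAt]

theorem dd_edgeAt_add (p t : ℕ) : dd a b (edgeAt a b p) (edgeAt a b (p + t)) = t % (a + b) := by
  rw [dd_eq_val_sub, posEquiv_edgeAt, posEquiv_edgeAt, Nat.cast_add, add_sub_cancel_left,
    Fin.val_natCast]

theorem edgeAt_add_dd (p : ℕ) (f : Edge a b) : edgeAt a b (p + dd a b (edgeAt a b p) f) = f := by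
  apply (posEquiv a b).injective
  rw [posEquiv_edgeAt, dd_eq_val_sub, posEquiv_edgeAt, Nat.cast_add, Fin.cast_val_eq_self,
    add_sub_cancel]

theorem dd_edgeAt {p q : ℕ} (hpq : p ≤ q) (hq : q < p + (a + b)) :
    dd a b (edgeAt a b p) (edgeAt a b q) = q - p := by
  obtain ⟨t, rfl⟩ := Nat.exists_eq_add_of_le hpq
  rw [dd_edgeAt_add, Nat.mod_eq_of_lt (by omega), Nat.add_sub_cancel_left]

theorem subpath_edgeAt (p : ℕ) (f : Edge a b) :
    subpath a b (edgeAt a b p) f =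
      (Finset.range (dd a b (edgeAt a b p) f + 1)).image (fun t => edgeAt a b (p + t)) := by
  ext g
  simp only [subpath, Finset.mem_filter, Finset.mem_univ, true_and, Finset.mem_image,
    Finset.mem_range]
  constructor
  · exact fun hg => ⟨_, Nat.lt_add_one_iff.2 hg, edgeAt_add_dd p g⟩
  · rintro ⟨t, ht, rfl⟩
    have := (Nat.mod_le t (a + b)).trans (Nat.lt_add_one_iff.1 ht)
    rwa [dd_edgeAt_add]

theorem sum_subpath_edgeAt {M : Type*} [AddCommMonoid M] (F : Edge a b → M) {p q : ℕ}
    (hpq : p ≤ q) (hq : q < p + (a + b)) :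
    ∑ g ∈ subpath a b (edgeAt a b p) (edgeAt a b q), F g =
      ∑ t ∈ Finset.Ico p (q + 1), F (edgeAt a b t) := by
  rw [subpath_edgeAt, dd_edgeAt hpq hq, Finset.sum_image, Finset.sum_Ico_eq_sum_range,
    Nat.sub_add_comm hpq]
  · intro s hs t ht hst
    simp only [Finset.coe_range, Set.mem_Iio] at hs ht
    have := congrArg (dd a b (edgeAt a b p)) hst
    rwa [dd_edgeAt_add, dd_edgeAt_add, Nat.mod_eq_of_lt (by omega),
      Nat.mod_eq_of_lt (by omega)] at this

theorem sum_range_edgeAt {M : Type*} [AddCommMonoid M] (F : Edge a b → M) :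
    ∑ t ∈ Finset.range (a + b), F (edgeAt a b t) = ∑ e, F e := by
  rw [← Fin.sum_univ_eq_sum_range, ← (posEquiv a b).symm.sum_comp]
  simp [edgeAt]

theorem not_compatible_of_initial_final_sums_pos (S1 : Fin a → ℕ) (S2 : Fin b → ℕ) {i k : ℕ}
    (hik : i + 2 ≤ k) (hki : k ≤ i + (a + b))
    (hwin : ∀ m, i < m → m < k → 0 < ∑ t ∈ Finset.Ico i m, hWeight S1 (edgeAt a b t) ∧
      0 < ∑ t ∈ Finset.Ico m k, vWeight S2 (edgeAt a b t)) :
    ¬Compatible a b S1 S2 := by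
  obtain ⟨j, rfl⟩ : ∃ j, k = j + 1 := ⟨k - 1, by omega⟩
  obtain ⟨h, hh⟩ : ∃ h, edgeAt a b i = .inl h := by
    have := (hwin (i + 1) (by omega) (by omega)).1
    rw [Nat.Ico_succ_singleton, Finset.sum_singleton] at this
    cases hi : edgeAt a b i with
    | inl h => exact ⟨h, rfl⟩
    | inr _ => simp [hi, hWeight] at this
  obtain ⟨v, hv⟩ : ∃ v, edgeAt a b j = .inr v := by
    have := (hwin j (by omega) (by omega)).2
    rw [Nat.Ico_succ_singleton, Finset.sum_singleton] at this
    cases hj : edgeAt a b j with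
    | inl _ => simp [hj, vWeight] at this
    | inr v => exact ⟨v, rfl⟩
  have hdv : dd a b (.inl h) (.inr v) = j - i := by rw [← hh, ← hv, dd_edgeAt (by omega) (by omega)]
  intro hc
  rcases hc h v with ⟨e, he, hbal⟩ | ⟨e, he0, he, hbal⟩
  · have hzero : fH a b S1 (subpath a b (.inl h) e) = 0 := by rw [fH, hbal, sub_self]
    rw [hdv, ← hh] at he
    rw [fH_eq_sum, ← hh, ← edgeAt_add_dd i e, sum_subpath_edgeAt _ (by omega) (by omega)] at hzero
    exact (hwin _ (by omega) (by omega)).1.ne' hzero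
  · have hzero : fV a b S2 (subpath a b e (.inr v)) = 0 := by rw [fV, hbal, sub_self]
    rw [hdv, ← hh] at he
    rw [← hh] at he0
    rw [fV_eq_sum, ← hv, ← edgeAt_add_dd i e, sum_subpath_edgeAt _ (by omega) (by omega)] at hzero
    exact (hwin _ (by omega) (by omega)).2.ne' hzero

end Cyclic

/-- **Magnitude bound for compatible pairs.** For any compatible pair `(S1, S2)`
on `D_{a1,a2}` with `(a1, a2) ≠ (0, 0)`, either `|S1| < a2` or `|S2| < a1`. -/
theorem compatible_magnitude_bound (a1 a2 : ℕ) (h : ¬(a1 = 0 ∧ a2 = 0))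
    (S1 : Fin a1 → ℕ) (S2 : Fin a2 → ℕ) (hc : Compatible a1 a2 S1 S2) :
    (∑ e, S1 e) < a2 ∨ (∑ e, S2 e) < a1 := by
  have : NeZero (a1 + a2) := ⟨by omega⟩
  by_contra! hcon
  obtain ⟨i, k, hik, hki, hwin⟩ := exists_initial_final_sums_pos (Nat.pos_of_neZero (a1 + a2))
    (edgeAt_periodic.comp (hWeight S1)) (edgeAt_periodic.comp (vWeight S2))
    (by rw [Function.comp_def, sum_range_edgeAt, sum_hWeight, sub_nonneg]; exact_mod_cast hcon.1)
    (by rw [Function.comp_def, sum_range_edgeAt, sum_vWeight, sub_nonneg]; exact_mod_cast hcon.2)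
    (fun _ => vWeight_neg_of_hWeight_nonneg S1 S2)
  exact not_compatible_of_initial_final_sums_pos S1 S2 hik hki hwin hc

end Dyck
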